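/- (Theorem on weights, consistency with ε = h^m.) Let f : ℝ → ℝ be infinitely differentiable and x ∈ ℝ (no hypothesis on critical points: all derivatives of f at x may vanish). Let p = 2 and let m be a real number with 0 < m ≤ 6 − 3/p = 9/2. For h > 0 set ε(h) = h^m, and define the WENO-UD5 weights αₖ(h) = dₖ(1 + (ζ(h)/(βₖ(h)+ε(h)))ᵖ) and ωₖ(h) = αₖ(h)/(α₀(h)+α₁(h)+α₂(h)), where βₖ(h) are the WENO-LOC smoothness indicators, ζ(h) is the global smoothness indicator, and d₀ = 1/10, d₁ = 6/10, d₂ = 3/10 (note βₖ(h)+ε(h) > 0 always). Then for each k ∈ {0,1,2}, ωₖ(h) = dₖ(1 + O(h³)) as h → 0⁺, i.e. ωₖ(h) − dₖ = O(h³). -/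

import Mathlib

open Filter Asymptotics Topology Set
open scoped ContDiff

/-- The WENO-LOC smoothness indicators of `f` at center `x` with mesh size `h`. -/
noncomputable def betaLOC (f : ℝ → ℝ) (x h : ℝ) : Fin 3 → ℝ :=
  ![(1/2) * ((f (x - h) - f (x - 2*h))^2 + (f x - f (x - h))^2)
      + (f x - 2 * f (x - h) + f (x - 2*h))^2,
    (1/2) * ((f x - f (x - h))^2 + (f (x + h) - f x)^2)
      + (f (x - h) - 2 * f x + f (x + h))^2,
    (1/2) * ((f (x + h) - f x)^2 + (f (x + 2*h) - f (x + h))^2)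
      + (f x - 2 * f (x + h) + f (x + 2*h))^2]

/-- The global smoothness indicator `ζ` of `f` at center `x` with mesh size `h`. -/
noncomputable def zetaUD (f : ℝ → ℝ) (x h : ℝ) : ℝ :=
  |(f (x - 2*h) - 2 * f (x - h) + f x)^2
    - 2 * (f (x - h) - 2 * f x + f (x + h))^2
    + (f x - 2 * f (x + h) + f (x + 2*h))^2|

/-- The linear (ideal) weights `d₀ = 1/10`, `d₁ = 6/10`, `d₂ = 3/10`. -/
noncomputable def dlin : Fin 3 → ℝ := ![1/10, 6/10, 3/10]


lemma abs_secondDiff_le {g : ℝ → ℝ} (hg : ContDiff ℝ ∞ g) (a t M : ℝ) (ht : 0 ≤ t)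
    (hM : ∀ u ∈ Set.Icc (a - t) (a + t), |deriv (deriv g) u| ≤ M) :
    |g (a + t) - 2 * g a + g (a - t)| ≤ M * t ^ 2 := by
  have hg1 : Differentiable ℝ g := hg.differentiable (by norm_num)
  have hgd : ContDiff ℝ ∞ (deriv g) := (contDiff_infty_iff_deriv.mp hg).2
  have hg2 : Differentiable ℝ (deriv g) := hgd.differentiable (by norm_num)
  set G : ℝ → ℝ := fun s => g (a + s) + g (a - s) - 2 * g a with hGdef
  have hGd : ∀ s : ℝ, HasDerivAt G (deriv g (a + s) - deriv g (a - s)) s := by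
    intro s
    have h1 : HasDerivAt (fun s : ℝ => g (a + s)) (deriv g (a + s) * 1) s :=
      (hg1 (a + s)).hasDerivAt.comp s ((hasDerivAt_id s).const_add a)
    have h2 : HasDerivAt (fun s : ℝ => g (a - s)) (deriv g (a - s) * (-1)) s :=
      (hg1 (a - s)).hasDerivAt.comp s ((hasDerivAt_id s).neg.const_add a)
    exact ((h1.add h2).sub_const (2 * g a)).congr_deriv (by ring)
  have hG' : ∀ s ∈ Icc (0:ℝ) t, |deriv g (a + s) - deriv g (a - s)| ≤ M * (2 * s) := by
    intro s hs
    have key := (convex_Icc (a - t) (a + t)).norm_image_sub_le_of_norm_deriv_le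
      (f := deriv g) (C := M) (fun u _ => hg2 u)
      (fun u hu => by simpa using hM u hu)
      (x := a + s) (y := a - s) ?_ ?_
    · rw [Real.norm_eq_abs, Real.norm_eq_abs, abs_sub_comm, abs_sub_comm (a - s)] at key
      calc |deriv g (a + s) - deriv g (a - s)| ≤ M * |a + s - (a - s)| := key
        _ = M * (2 * s) := by rw [show a + s - (a - s) = 2 * s by ring,
              abs_of_nonneg (by linarith [hs.1])]
    · constructor <;> [linarith [hs.1, hs.2]; linarith [hs.2]]
    · constructor <;> [linarith [hs.2]; linarith [hs.1, hs.2]]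
  -- upper bound
  have hmono : ∀ (σ : ℝ), σ = 1 ∨ σ = -1 →
      σ * G t ≤ M * t ^ 2 := by
    intro σ hσ
    set U : ℝ → ℝ := fun s => M * s ^ 2 - σ * G s with hU
    have hUd : ∀ s : ℝ, HasDerivAt U (M * (2 * s) - σ * (deriv g (a + s) - deriv g (a - s))) s := by
      intro s
      have h1 : HasDerivAt (fun s : ℝ => M * s ^ 2) (M * (2 * s)) s := by
        simpa using ((hasDerivAt_pow 2 s).const_mul M)
      exact h1.sub ((hGd s).const_mul σ)
    have hmon : MonotoneOn U (Icc (0:ℝ) t) := by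
      apply monotoneOn_of_deriv_nonneg (convex_Icc 0 t)
        (fun s _ => (hUd s).differentiableAt.continuousAt.continuousWithinAt)
        (fun s _ => (hUd s).differentiableAt.differentiableWithinAt)
      intro s hs
      rw [interior_Icc] at hs
      rw [(hUd s).deriv]
      have hb := hG' s ⟨hs.1.le, hs.2.le⟩
      have hσ1 : |σ| = 1 := by rcases hσ with h | h <;> simp [h]
      have : |σ * (deriv g (a + s) - deriv g (a - s))| ≤ M * (2 * s) := by
        rw [abs_mul, hσ1, one_mul]; exact hb
      linarith [le_abs_self (σ * (deriv g (a + s) - deriv g (a - s))), this]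
    have h0 : U 0 ≤ U t := hmon ⟨le_refl 0, ht⟩ ⟨ht, le_refl t⟩ ht
    have hG0 : G 0 = 0 := by simp [hGdef]; ring
    simp only [hU, hG0] at h0
    simp only [mul_zero, zero_pow, sub_zero] at h0
    nlinarith [h0]
  have h1 := hmono 1 (Or.inl rfl)
  have h2 := hmono (-1) (Or.inr rfl)
  have : |G t| ≤ M * t ^ 2 := abs_le.mpr ⟨by linarith, by linarith⟩
  calc |g (a + t) - 2 * g a + g (a - t)| = |G t| := by rw [hGdef]; ring_nf
    _ ≤ M * t ^ 2 := this

lemma zeta_bound {f : ℝ → ℝ} (hf : ContDiff ℝ ∞ f) (x : ℝ) :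
    ∃ C : ℝ, 0 ≤ C ∧ ∀ h : ℝ, 0 < h → h ≤ 1 → zetaUD f x h ≤ C * h ^ 6 := by
  set D1 := deriv f with hD1
  set D2 := deriv D1 with hD2
  set D3 := deriv D2 with hD3
  set D4 := deriv D3 with hD4
  have hf1 : ContDiff ℝ ∞ D1 := (contDiff_infty_iff_deriv.mp hf).2
  have hf2 : ContDiff ℝ ∞ D2 := (contDiff_infty_iff_deriv.mp hf1).2
  have hf3 : ContDiff ℝ ∞ D3 := (contDiff_infty_iff_deriv.mp hf2).2
  have hf4 : ContDiff ℝ ∞ D4 := (contDiff_infty_iff_deriv.mp hf3).2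
  have hdf : Differentiable ℝ f := hf.differentiable (by norm_num)
  have hdf1 : Differentiable ℝ D1 := hf1.differentiable (by norm_num)
  have hdf2 : Differentiable ℝ D2 := hf2.differentiable (by norm_num)
  -- bounds on a compact set
  have hK : IsCompact (Icc (x - 3) (x + 3)) := isCompact_Icc
  obtain ⟨M2, hM2⟩ := hK.exists_bound_of_continuousOn (hf2.continuous.continuousOn)
  obtain ⟨M3, hM3⟩ := hK.exists_bound_of_continuousOn (hf3.continuous.continuousOn)
  obtain ⟨M4, hM4⟩ := hK.exists_bound_of_continuousOn (hf4.continuous.continuousOn)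
  have hxK : x ∈ Icc (x - 3) (x + 3) := by constructor <;> linarith
  have hM2n : 0 ≤ M2 := le_trans (norm_nonneg _) (hM2 x hxK)
  have hM3n : 0 ≤ M3 := le_trans (norm_nonneg _) (hM3 x hxK)
  have hM4n : 0 ≤ M4 := le_trans (norm_nonneg _) (hM4 x hxK)
  refine ⟨2 * M3 ^ 2 + 2 * M2 * M4, by positivity, ?_⟩
  intro h hh0 hh1
  set φ0 : ℝ → ℝ := fun u => f (x + u + h) - 2 * f (x + u) + f (x + u - h) with hφ0
  set φ1 : ℝ → ℝ := fun u => D1 (x + u + h) - 2 * D1 (x + u) + D1 (x + u - h) with hφ1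
  set φ2 : ℝ → ℝ := fun u => D2 (x + u + h) - 2 * D2 (x + u) + D2 (x + u - h) with hφ2
  have key : ∀ (g : ℝ → ℝ), Differentiable ℝ g → ∀ u : ℝ,
      HasDerivAt (fun u => g (x + u + h) - 2 * g (x + u) + g (x + u - h))
        (deriv g (x + u + h) - 2 * deriv g (x + u) + deriv g (x + u - h)) u := by
    intro g hg u
    have h1 : HasDerivAt (fun u : ℝ => g (x + u + h)) (deriv g (x + u + h) * 1) u :=
      (hg _).hasDerivAt.comp u (((hasDerivAt_id u).const_add x).add_const h)
    have h2 : HasDerivAt (fun u : ℝ => g (x + u)) (deriv g (x + u) * 1) u :=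
      (hg _).hasDerivAt.comp u ((hasDerivAt_id u).const_add x)
    have h3 : HasDerivAt (fun u : ℝ => g (x + u - h)) (deriv g (x + u - h) * 1) u :=
      (hg _).hasDerivAt.comp u (((hasDerivAt_id u).const_add x).sub_const h)
    exact ((h1.sub (h2.const_mul 2)).add h3).congr_deriv (by ring)
  have hφ0d : ∀ u : ℝ, HasDerivAt φ0 (φ1 u) u := key f hdf
  have hφ1d : ∀ u : ℝ, HasDerivAt φ1 (φ2 u) u := by
    simpa [hφ1, hφ2, ← hD2] using key D1 hdf1
  set ψ : ℝ → ℝ := fun u => (φ0 u) ^ 2 with hψ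
  have hψd : ∀ u : ℝ, HasDerivAt ψ (2 * φ0 u * φ1 u) u := by
    intro u
    have := (hφ0d u).pow 2
    simp at this
    exact this
  have hψ1d : ∀ u : ℝ, HasDerivAt (fun u => 2 * φ0 u * φ1 u)
      (2 * φ1 u * φ1 u + 2 * φ0 u * φ2 u) u := by
    intro u
    have := (((hφ0d u).const_mul 2)).mul (hφ1d u)
    exact this
  have hdψ : deriv ψ = fun u => 2 * φ0 u * φ1 u := funext fun u => (hψd u).deriv
  have hddψ : ∀ u : ℝ, deriv (deriv ψ) u = 2 * φ1 u * φ1 u + 2 * φ0 u * φ2 u := by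
    intro u; rw [hdψ]; exact (hψ1d u).deriv
  -- smoothness of ψ
  have haff : ∀ c : ℝ, ContDiff ℝ ∞ (fun u : ℝ => x + u + c) := fun c =>
    (contDiff_const.add contDiff_id).add contDiff_const
  have hφ0s : ContDiff ℝ ∞ φ0 := by
    have e1 := hf.comp (haff h)
    have e2 := hf.comp (haff 0)
    have e3 : ContDiff ℝ ∞ (fun u : ℝ => f (x + u - h)) :=
      hf.comp ((contDiff_const.add contDiff_id).sub contDiff_const)
    simpa [hφ0] using (e1.sub ((contDiff_const (c := (2:ℝ))).mul (by simpa [Function.comp_def] using e2))).add e3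
  have hψs : ContDiff ℝ ∞ ψ := hφ0s.pow 2
  -- pointwise bounds for φ0, φ1, φ2 on [-h, h]
  have hsub : ∀ u : ℝ, u ∈ Icc (-h) h → ∀ v ∈ Icc (x + u - h) (x + u + h),
      v ∈ Icc (x - 3) (x + 3) := by
    intro u hu v hv
    rcases hu with ⟨hu1, hu2⟩; rcases hv with ⟨hv1, hv2⟩
    constructor <;> linarith
  have hb : ∀ (g : ℝ → ℝ), ContDiff ℝ ∞ g → ∀ (M : ℝ),
      (∀ v ∈ Icc (x - 3) (x + 3), ‖deriv (deriv g) v‖ ≤ M) →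
      ∀ u ∈ Icc (-h) h,
        |g (x + u + h) - 2 * g (x + u) + g (x + u - h)| ≤ M * h ^ 2 := by
    intro g hg M hMg u hu
    have := abs_secondDiff_le hg (x + u) h M hh0.le
      (fun v hv => by simpa using hMg v (hsub u hu v hv))
    simpa using this
  have hb0 : ∀ u ∈ Icc (-h) h, |φ0 u| ≤ M2 * h ^ 2 := by
    intro u hu
    exact hb f hf M2 (fun v hv => hM2 v hv) u hu
  have hb1 : ∀ u ∈ Icc (-h) h, |φ1 u| ≤ M3 * h ^ 2 := by
    intro u hu
    exact hb D1 hf1 M3 (fun v hv => hM3 v hv) u hu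
  have hb2 : ∀ u ∈ Icc (-h) h, |φ2 u| ≤ M4 * h ^ 2 := by
    intro u hu
    exact hb D2 hf2 M4 (fun v hv => hM4 v hv) u hu
  -- bound on second derivative of ψ
  have hψbd : ∀ u ∈ Icc ((0:ℝ) - h) (0 + h),
      |deriv (deriv ψ) u| ≤ (2 * M3 ^ 2 + 2 * M2 * M4) * h ^ 4 := by
    intro u hu
    have hu' : u ∈ Icc (-h) h := by simpa using hu
    rw [hddψ u]
    have h0 := hb0 u hu'
    have h1 := hb1 u hu'
    have h2 := hb2 u hu'
    have e1 : |2 * φ1 u * φ1 u| ≤ 2 * (M3 * h ^ 2) * (M3 * h ^ 2) := by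
      rw [abs_mul, abs_mul]
      have : |(2:ℝ)| = 2 := by norm_num
      rw [this]
      have := abs_nonneg (φ1 u)
      nlinarith [abs_nonneg (φ1 u)]
    have e2 : |2 * φ0 u * φ2 u| ≤ 2 * (M2 * h ^ 2) * (M4 * h ^ 2) := by
      rw [abs_mul, abs_mul]
      have : |(2:ℝ)| = 2 := by norm_num
      rw [this]
      nlinarith [abs_nonneg (φ0 u), abs_nonneg (φ2 u), abs_le.mp h0, abs_le.mp h2]
    calc |2 * φ1 u * φ1 u + 2 * φ0 u * φ2 u|
        ≤ |2 * φ1 u * φ1 u| + |2 * φ0 u * φ2 u| := abs_add_le _ _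
      _ ≤ 2 * (M3 * h ^ 2) * (M3 * h ^ 2) + 2 * (M2 * h ^ 2) * (M4 * h ^ 2) := by linarith
      _ = (2 * M3 ^ 2 + 2 * M2 * M4) * h ^ 4 := by ring
  have final := abs_secondDiff_le hψs 0 h ((2 * M3 ^ 2 + 2 * M2 * M4) * h ^ 4) hh0.le hψbd
  have hzeq : zetaUD f x h = |ψ (0 + h) - 2 * ψ 0 + ψ (0 - h)| := by
    simp only [zetaUD, hψ, hφ0]
    ring_nf
  rw [hzeq]
  calc |ψ (0 + h) - 2 * ψ 0 + ψ (0 - h)|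
      ≤ (2 * M3 ^ 2 + 2 * M2 * M4) * h ^ 4 * h ^ 2 := final
    _ = (2 * M3 ^ 2 + 2 * M2 * M4) * h ^ 6 := by ring

lemma weight_est (tk t0 t1 t2 d B : ℝ)
    (h00 : 0 ≤ t0) (h01 : t0 ≤ B) (h10 : 0 ≤ t1) (h11 : t1 ≤ B)
    (h20 : 0 ≤ t2) (h21 : t2 ≤ B) (hk0 : 0 ≤ tk) (hk1 : tk ≤ B)
    (hd0 : 0 ≤ d) (hd1 : d ≤ 1) :
    |d * (1 + tk) / (1/10 * (1 + t0) + 6/10 * (1 + t1) + 3/10 * (1 + t2)) - d| ≤ B := by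
  set S := 1/10 * (1 + t0) + 6/10 * (1 + t1) + 3/10 * (1 + t2) with hS
  have hB : 0 ≤ B := le_trans h00 h01
  have hS1 : 1 ≤ S := by rw [hS]; linarith
  have hSpos : 0 < S := lt_of_lt_of_le one_pos hS1
  have e : d * (1 + tk) / S - d = (d * (1 + tk) - d * S) / S := by
    field_simp
  rw [e, abs_div, abs_of_pos hSpos, div_le_iff₀ hSpos]
  have habs : |d * (1 + tk) - d * S| ≤ B := by
    rw [hS]
    apply abs_le.mpr
    constructor
    · nlinarith [mul_nonneg hd0 hk0, mul_nonneg hd0 h00, mul_nonneg hd0 h10,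
        mul_nonneg hd0 h20, mul_nonneg (sub_nonneg.mpr hd1) h00,
        mul_nonneg (sub_nonneg.mpr hd1) h10, mul_nonneg (sub_nonneg.mpr hd1) h20,
        mul_nonneg (sub_nonneg.mpr hd1) hk0]
    · nlinarith [mul_nonneg hd0 hk0, mul_nonneg hd0 h00, mul_nonneg hd0 h10,
        mul_nonneg hd0 h20, mul_nonneg (sub_nonneg.mpr hd1) h00,
        mul_nonneg (sub_nonneg.mpr hd1) h10, mul_nonneg (sub_nonneg.mpr hd1) h20,
        mul_nonneg (sub_nonneg.mpr hd1) hk0]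
  have hBS : B ≤ B * S := by nlinarith
  linarith [habs]

/-- Consistency of the WENO-UD5 weights with `ε = h^m`: for `p = 2` and
`0 < m ≤ 6 − 3/p = 9/2`, the nonlinear weights satisfy `ωₖ − dₖ = O(h³)`
as `h → 0⁺`, with no hypothesis on critical points (all derivatives of `f`
at `x` may vanish). -/
theorem wenoUD5_weights_consistency (f : ℝ → ℝ) (hf : ContDiff ℝ (⊤ : ℕ∞) f) (x : ℝ)
    (m : ℝ) (hm0 : 0 < m) (hm : m ≤ 6 - 3 / 2) :
    ∀ k : Fin 3,
      (fun h : ℝ =>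
          (dlin k * (1 + (zetaUD f x h / (betaLOC f x h k + h ^ m))^2))
            / (∑ l : Fin 3, dlin l * (1 + (zetaUD f x h / (betaLOC f x h l + h ^ m))^2))
          - dlin k)
        =O[𝓝[>] (0:ℝ)] fun h => h ^ 3 := by
  have hf' : ContDiff ℝ ((⊤:ℕ∞):WithTop ℕ∞) f := hf.of_le (by simp)
  obtain ⟨C, hC0, hC⟩ := zeta_bound hf' x
  intro k
  rw [Asymptotics.isBigO_iff]
  refine ⟨C ^ 2, ?_⟩
  have hmem : Set.Ioo (0:ℝ) 1 ∈ 𝓝[>] (0:ℝ) :=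
    Ioo_mem_nhdsGT_of_mem ⟨le_refl 0, one_pos⟩
  filter_upwards [hmem] with h hh
  obtain ⟨hh0, hh1⟩ := hh
  have hεpos : 0 < h ^ m := Real.rpow_pos_of_pos hh0 m
  have hζ0 : 0 ≤ zetaUD f x h := abs_nonneg _
  have hζ : zetaUD f x h ≤ C * h ^ 6 := hC h hh0 hh1.le
  have hβ : ∀ l : Fin 3, 0 ≤ betaLOC f x h l := by
    intro l
    fin_cases l <;> simp [betaLOC] <;> positivity
  -- the crucial bound on each θ_l
  have hθ : ∀ l : Fin 3,
      (zetaUD f x h / (betaLOC f x h l + h ^ m)) ^ 2 ≤ C ^ 2 * h ^ (3:ℕ) := by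
    intro l
    have hden : (0:ℝ) < betaLOC f x h l + h ^ m := by linarith [hβ l, hεpos]
    have step1 : zetaUD f x h / (betaLOC f x h l + h ^ m) ≤ zetaUD f x h / h ^ m := by
      gcongr
      linarith [hβ l]
    have step2 : (zetaUD f x h / (betaLOC f x h l + h ^ m)) ^ 2
        ≤ (zetaUD f x h / h ^ m) ^ 2 := by
      apply pow_le_pow_left₀ (by positivity) step1
    have hε2 : (h ^ m) ^ (2:ℕ) = h ^ (m * 2) := by
      rw [← Real.rpow_natCast (h ^ m) 2, ← Real.rpow_mul hh0.le]
      norm_num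
    have h12 : h ^ (12:ℕ) = h ^ ((12:ℝ)) := by
      rw [← Real.rpow_natCast h 12]; norm_num
    have step4 : (zetaUD f x h) ^ 2 ≤ C ^ 2 * h ^ (12:ℕ) := by
      nlinarith [pow_pos hh0 6, pow_pos hh0 12]
    have hdiv : h ^ (12:ℕ) / (h ^ m) ^ (2:ℕ) = h ^ ((12:ℝ) - m * 2) := by
      rw [hε2, h12, ← Real.rpow_sub hh0]
    have step5 : (zetaUD f x h / h ^ m) ^ 2 ≤ C ^ 2 * (h ^ ((12:ℝ) - m * 2)) := by
      rw [div_pow]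
      calc zetaUD f x h ^ 2 / (h ^ m) ^ 2
          ≤ (C ^ 2 * h ^ (12:ℕ)) / (h ^ m) ^ 2 := by gcongr
        _ = C ^ 2 * (h ^ (12:ℕ) / (h ^ m) ^ (2:ℕ)) := by ring
        _ = C ^ 2 * (h ^ ((12:ℝ) - m * 2)) := by rw [hdiv]
    have step6 : h ^ ((12:ℝ) - m * 2) ≤ h ^ ((3:ℝ)) :=
      Real.rpow_le_rpow_of_exponent_ge hh0 hh1.le (by linarith)
    have step7 : h ^ ((3:ℝ)) = h ^ (3:ℕ) := by
      rw [← Real.rpow_natCast h 3]; norm_num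
    calc (zetaUD f x h / (betaLOC f x h l + h ^ m)) ^ 2
        ≤ (zetaUD f x h / h ^ m) ^ 2 := step2
      _ ≤ C ^ 2 * (h ^ ((12:ℝ) - m * 2)) := step5
      _ ≤ C ^ 2 * h ^ ((3:ℝ)) := mul_le_mul_of_nonneg_left step6 (sq_nonneg C)
      _ = C ^ 2 * h ^ (3:ℕ) := by rw [step7]
  have hθ0 : ∀ l : Fin 3, 0 ≤ (zetaUD f x h / (betaLOC f x h l + h ^ m)) ^ 2 :=
    fun l => sq_nonneg _
  rw [Real.norm_eq_abs, Real.norm_eq_abs, abs_of_pos (pow_pos hh0 3)]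
  rw [Fin.sum_univ_three]
  have d0 : dlin 0 = 1/10 := rfl
  have d1 : dlin 1 = 6/10 := rfl
  have d2 : dlin 2 = 3/10 := rfl
  rw [d0, d1, d2]
  have hdk0 : 0 ≤ dlin k := by fin_cases k <;> norm_num [dlin]
  have hdk1 : dlin k ≤ 1 := by fin_cases k <;> norm_num [dlin]
  exact weight_est _ _ _ _ _ _ (hθ0 0) (hθ 0) (hθ0 1) (hθ 1) (hθ0 2) (hθ 2)
    (hθ0 k) (hθ k) hdk0 hdk1
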